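/- arXiv:2409.01377 — 4 statements merged into one kernel-verified Lean document; each statement's English description precedes it below -/
import Mathlib

section
/- Let S ⊆ ℕ be sum-closed (for every k ∈ S and every f : Fin k → ℕ with all values in S, ∑ i, f i ∈ S) such that (i) if S is nonempty then 1 ∈ S, and (ii) for all m, n ∈ ℕ with m + n ∈ S and m + n ≠ 1, both m ∈ S and n ∈ S. Then S is one of ∅, {1}, {0,1}, or ℕ. -/
/-!
Once `S` contains some `k ≥ 2`, splitting `k = 2 + (k - 2)` and then `2 = 0 + 2` puts `0` and `2`
in `S`; a sum of two terms is then allowed, so `n ↦ n + 1` preserves `S` and `S = ℕ`.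
Otherwise `S ⊆ {0, 1}`, and `1 ∈ S` rules out `S = {0}`.
-/

def SumClosed (S : Set ℕ) : Prop :=
  ∀ k ∈ S, ∀ f : Fin k → ℕ, (∀ i, f i ∈ S) → (∑ i, f i) ∈ S

namespace SumClosed

variable {S : Set ℕ}

theorem add_mem (hS : SumClosed S) (h2 : 2 ∈ S) {m n : ℕ} (hm : m ∈ S) (hn : n ∈ S) :
    m + n ∈ S := by
  simpa [Fin.sum_univ_two] using hS 2 h2 ![m, n] (Fin.forall_fin_two.mpr ⟨hm, hn⟩)

theorem eq_univ (hS : SumClosed S) (h0 : 0 ∈ S) (h1 : 1 ∈ S) (h2 : 2 ∈ S) : S = Set.univ :=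
  Set.eq_univ_of_forall fun n => Nat.rec h0 (fun _ hn => hS.add_mem h2 hn h1) n

end SumClosed

theorem stmt_5 (S : Set ℕ) (hS : SumClosed S)
    (hone : S.Nonempty → 1 ∈ S)
    (haeu : ∀ m n : ℕ, m + n ∈ S → m + n ≠ 1 → m ∈ S ∧ n ∈ S) :
    S = ∅ ∨ S = {1} ∨ S = {0, 1} ∨ S = Set.univ := by
  by_cases hlarge : ∃ k ∈ S, 2 ≤ k
  · obtain ⟨k, hk, hk2⟩ := hlarge
    have h2 : 2 ∈ S := (haeu 2 (k - 2) (by rwa [Nat.add_sub_cancel' hk2]) (by omega)).1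
    have h0 : 0 ∈ S := (haeu 0 2 h2 (by omega)).1
    exact .inr <| .inr <| .inr <| hS.eq_univ h0 (hone ⟨2, h2⟩) h2
  · have hsub : S ⊆ {0, 1} := fun n hn => by
      have : n < 2 := not_le.mp fun h => hlarge ⟨n, hn, h⟩
      grind
    rcases Set.subset_pair_iff_eq.mp hsub with h | h | h | h
    · exact .inl h
    · have := hone (by simp [h])
      simp [h] at this
    · exact .inr <| .inl h
    · exact .inr <| .inr <| .inl h
end

section
/- Let π : C → D be a monotone map of partial orders admitting both a Galois connection left adjoint L ⊣ π and a Galois connection right adjoint π ⊣ R. Then π ∘ L = id_D if and only if π ∘ R = id_D; i.e. the left adjoint is fully faithful if and only if the right adjoint is fully faithful. -/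
/-!
For an adjoint triple `l ⊣ u ⊣ r` of monotone maps between partial orders, the unit and counit
inequalities `b ≤ u (l b)` and `u (r b) ≤ b` reduce each equation `u (l b) = b`, `u (r b) = b` to a
single inequality, and the two adjunctions identify both inequalities with `l b ≤ r b`.
-/

theorem GaloisConnection.u_l_eq_iff_u_r_eq {α β : Type*} [PartialOrder α] [PartialOrder β]
    {l r : β → α} {u : α → β} (gl : GaloisConnection l u) (gr : GaloisConnection u r) (b : β) :
    u (l b) = b ↔ u (r b) = b :=
  calc u (l b) = b ↔ u (l b) ≤ b := ((gl.le_u_l b).ge_iff_eq').symm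
    _ ↔ l b ≤ r b := gr _ _
    _ ↔ b ≤ u (r b) := gl _ _
    _ ↔ u (r b) = b := (gr.l_u_le b).ge_iff_eq

theorem stmt_10_general {C D : Type*} [PartialOrder C] [PartialOrder D]
    (π : C → D)
    (L : D → C) (hgcL : ∀ c d, L d ≤ c ↔ d ≤ π c)
    (R : D → C) (hgcR : ∀ c d, π c ≤ d ↔ c ≤ R d) :
    (∀ d, π (L d) = d) ↔ (∀ d, π (R d) = d) :=
  forall_congr' (GaloisConnection.u_l_eq_iff_u_r_eq (fun d c => hgcL c d) hgcR)

theorem stmt_10 {C D : Type*} [PartialOrder C] [PartialOrder D]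
    (π : C → D) (hπ : Monotone π)
    (L : D → C) (hL : Monotone L) (hgcL : ∀ c d, L d ≤ c ↔ d ≤ π c)
    (R : D → C) (hR : Monotone R) (hgcR : ∀ c d, π c ≤ d ↔ c ≤ R d) :
    (∀ d, π (L d) = d) ↔ (∀ d, π (R d) = d) :=
  stmt_10_general π L hgcL R hgcR
end

section
/- Define a transfer system on the chain Fin 3 = {0 < 1 < 2} to be a relation R on Fin 3 such that: R i j implies i ≤ j; R is reflexive; R is transitive; and if R i j and k ≤ j then R (min i k) k. There are exactly 5 transfer systems on Fin 3. -/
/-!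
A transfer system on `Fin 3` is determined by which of the pairs `0 → 1`, `1 → 2`, `0 → 2` it
contains. Transitivity forces `0 → 1` and `1 → 2` to give `0 → 2`, and restricting `0 → 2` along
`1 ≤ 2` forces `0 → 1`. Exactly five of the eight patterns satisfy both constraints, and each of
them is realised by a transfer system.
-/

def IsTransferSystem {α : Type*} [LinearOrder α] (R : α → α → Prop) : Prop :=
  (∀ i j, R i j → i ≤ j) ∧ (∀ i, R i i) ∧
    (∀ i j k, R i j → R j k → R i k) ∧ (∀ i j k, R i j → k ≤ j → R (min i k) k)

section LinearOrder

variable {α : Type*} [LinearOrder α]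

theorem IsTransferSystem.ext_of_lt {R S : α → α → Prop} (hR : IsTransferSystem R)
    (hS : IsTransferSystem S) (h : ∀ i j, i < j → (R i j ↔ S i j)) : R = S := by
  obtain ⟨hR_le, hR_refl, -, -⟩ := hR
  obtain ⟨hS_le, hS_refl, -, -⟩ := hS
  funext i j
  apply propext
  rcases lt_trichotomy i j with hij | rfl | hji
  · exact h i j hij
  · exact iff_of_true (hR_refl i) (hS_refl i)
  · exact iff_of_false (fun hr => (hR_le i j hr).not_gt hji) (fun hs => (hS_le i j hs).not_gt hji)

theorem isTransferSystem_eq : IsTransferSystem (α := α) (· = ·) := by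
  refine ⟨fun i j h => h.le, fun i => rfl, fun i j k hij hjk => hij.trans hjk, ?_⟩
  rintro i j k rfl hk
  simp [hk]

theorem isTransferSystem_le : IsTransferSystem (α := α) (· ≤ ·) :=
  ⟨fun _ _ h => h, le_refl, fun _ _ _ => le_trans, fun _ _ _ _ _ => min_le_right _ _⟩

end LinearOrder

def transfer01 : Fin 3 → Fin 3 → Prop := fun i j => i = j ∨ (i = 0 ∧ j = 1)

def transfer12 : Fin 3 → Fin 3 → Prop := fun i j => i = j ∨ (i = 1 ∧ j = 2)

def transferFrom0 : Fin 3 → Fin 3 → Prop := fun i j => i = j ∨ i = 0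

theorem isTransferSystem_transfer01 : IsTransferSystem transfer01 := by
  unfold IsTransferSystem transfer01
  decide

theorem isTransferSystem_transfer12 : IsTransferSystem transfer12 := by
  unfold IsTransferSystem transfer12
  decide

theorem isTransferSystem_transferFrom0 : IsTransferSystem transferFrom0 := by
  unfold IsTransferSystem transferFrom0
  decide

theorem IsTransferSystem.eq_iff_fin_three {R S : Fin 3 → Fin 3 → Prop}
    (hR : IsTransferSystem R) (hS : IsTransferSystem S) :
    R = S ↔ (R 0 1 ↔ S 0 1) ∧ (R 1 2 ↔ S 1 2) ∧ (R 0 2 ↔ S 0 2) := by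
  refine ⟨by rintro rfl; simp, fun ⟨h01, h12, h02⟩ => hR.ext_of_lt hS fun i j hij => ?_⟩
  fin_cases i <;> fin_cases j <;> first | assumption | simp at hij

theorem IsTransferSystem.fin_three_cases {R : Fin 3 → Fin 3 → Prop} (hR : IsTransferSystem R) :
    R = (· = ·) ∨ R = transfer01 ∨ R = transfer12 ∨ R = transferFrom0 ∨ R = (· ≤ ·) := by
  obtain ⟨-, -, htrans, hrestrict⟩ := id hR
  have h02_01 : R 0 2 → R 0 1 := fun h => hrestrict 0 2 1 h (by decide)
  have h01_12 : R 0 1 → R 1 2 → R 0 2 := htrans 0 1 2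
  rw [hR.eq_iff_fin_three isTransferSystem_eq, hR.eq_iff_fin_three isTransferSystem_transfer01,
    hR.eq_iff_fin_three isTransferSystem_transfer12,
    hR.eq_iff_fin_three isTransferSystem_transferFrom0, hR.eq_iff_fin_three isTransferSystem_le]
  simp [transfer01, transfer12, transferFrom0]
  tauto

theorem setOf_isTransferSystem_fin_three :
    {R : Fin 3 → Fin 3 → Prop | IsTransferSystem R} =
      {(· = ·), transfer01, transfer12, transferFrom0, (· ≤ ·)} := by
  ext R
  refine ⟨IsTransferSystem.fin_three_cases, ?_⟩
  rintro (rfl | rfl | rfl | rfl | rfl)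
  exacts [isTransferSystem_eq, isTransferSystem_transfer01, isTransferSystem_transfer12,
    isTransferSystem_transferFrom0, isTransferSystem_le]

theorem stmt_13 :
    Set.ncard {R : Fin 3 → Fin 3 → Prop |
      (∀ i j, R i j → i ≤ j) ∧ (∀ i, R i i) ∧
      (∀ i j k, R i j → R j k → R i k) ∧
      (∀ i j k, R i j → k ≤ j → R (min i k) k)} = 5 := by
  change Set.ncard {R | IsTransferSystem R} = 5
  rw [setOf_isTransferSystem_fin_three, Set.ncard_insert_of_notMem, Set.ncard_insert_of_notMem,
    Set.ncard_insert_of_notMem, Set.ncard_insert_of_notMem, Set.ncard_singleton] <;>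
  simp only [Set.mem_insert_iff, Set.mem_singleton_iff, funext_iff, eq_iff_iff, transfer01,
    transfer12, transferFrom0] <;>
  decide
end

section
/- Let S ⊆ ℕ be sum-closed (for every k ∈ S and every f : Fin k → ℕ with all values in S, ∑ i, f i ∈ S) with 0 ∈ S and 1 ∈ S. Define M := {k ∈ ℕ : for every f : Fin k → ℕ with f i ∈ S for all i, ∏ i, f i ∈ S}. Then 0 ∈ M, 1 ∈ M, and M is closed under addition: a, b ∈ M implies a + b ∈ M. -/
def ProdClosedArity (S : Set ℕ) (k : ℕ) : Prop :=
  ∀ f : Fin k → ℕ, (∀ i, f i ∈ S) → (∏ i, f i) ∈ S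

variable {S : Set ℕ}

theorem SumClosed.mul_mem (hS : SumClosed S) {x y : ℕ} (hx : x ∈ S) (hy : y ∈ S) :
    x * y ∈ S := by
  simpa using hS x hx (fun _ => y) (fun _ => hy)

theorem prodClosedArity_zero (h1 : 1 ∈ S) : ProdClosedArity S 0 := fun _ _ => by
  simpa using h1

theorem prodClosedArity_one (S : Set ℕ) : ProdClosedArity S 1 := fun f hf => by
  simpa using hf 0

theorem ProdClosedArity.add (hS : SumClosed S) {a b : ℕ} (ha : ProdClosedArity S a)
    (hb : ProdClosedArity S b) : ProdClosedArity S (a + b) := fun f hf => by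
  rw [Fin.prod_univ_add]
  exact hS.mul_mem (ha _ fun _ => hf _) (hb _ fun _ => hf _)

theorem stmt_15_general (S : Set ℕ) (hS : SumClosed S) (h1 : 1 ∈ S) :
    0 ∈ {k : ℕ | ∀ f : Fin k → ℕ, (∀ i, f i ∈ S) → (∏ i, f i) ∈ S} ∧
    1 ∈ {k : ℕ | ∀ f : Fin k → ℕ, (∀ i, f i ∈ S) → (∏ i, f i) ∈ S} ∧
    ∀ a ∈ {k : ℕ | ∀ f : Fin k → ℕ, (∀ i, f i ∈ S) → (∏ i, f i) ∈ S},
      ∀ b ∈ {k : ℕ | ∀ f : Fin k → ℕ, (∀ i, f i ∈ S) → (∏ i, f i) ∈ S},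
        a + b ∈ {k : ℕ | ∀ f : Fin k → ℕ, (∀ i, f i ∈ S) → (∏ i, f i) ∈ S} :=
  ⟨prodClosedArity_zero h1, prodClosedArity_one S,
    fun _ ha _ hb => ProdClosedArity.add hS ha hb⟩

theorem stmt_15 (S : Set ℕ) (hS : SumClosed S) (h0 : 0 ∈ S) (h1 : 1 ∈ S) :
    0 ∈ {k : ℕ | ∀ f : Fin k → ℕ, (∀ i, f i ∈ S) → (∏ i, f i) ∈ S} ∧
    1 ∈ {k : ℕ | ∀ f : Fin k → ℕ, (∀ i, f i ∈ S) → (∏ i, f i) ∈ S} ∧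
    ∀ a ∈ {k : ℕ | ∀ f : Fin k → ℕ, (∀ i, f i ∈ S) → (∏ i, f i) ∈ S},
      ∀ b ∈ {k : ℕ | ∀ f : Fin k → ℕ, (∀ i, f i ∈ S) → (∏ i, f i) ∈ S},
        a + b ∈ {k : ℕ | ∀ f : Fin k → ℕ, (∀ i, f i ∈ S) → (∏ i, f i) ∈ S} :=
  stmt_15_general S hS h1
end
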